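/- arXiv:2511.20168 — 4 statements merged into one kernel-verified Lean document; each statement's English description precedes it below -/
import Mathlib

section
/- Let μ, η, β > 0. Define Ψ₂(t,s) = ∏_{k=s+1}^{t} (β + μηβ/k). Then for all integers t ≥ 2 and 1 ≤ s < t, 0 < Ψ₂(t,s) ≤ β^{t-s} (t/s)^{μη}. -/
/-!
After factoring out `β`, bound each factor `1 + μη/k` by `exp (μη/k)`; the harmonic sum
`∑_{k=s+1}^t 1/k` is at most `log (t/s)` since `1/(k+1) ≤ log ((k+1)/k)`.
-/

open Finset Real

lemma inv_succ_le_log_succ_div {n : ℕ} (hn : 0 < n) :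
    ((n : ℝ) + 1)⁻¹ ≤ log (((n : ℝ) + 1) / n) := by
  have hn' : (0 : ℝ) < n := by exact_mod_cast hn
  convert one_sub_inv_le_log_of_pos (x := ((n : ℝ) + 1) / n) (by positivity) using 1
  field_simp
  ring

lemma sum_Icc_inv_le_log_div {s t : ℕ} (hs : 0 < s) (hst : s ≤ t) :
    ∑ k ∈ Icc (s + 1) t, (k : ℝ)⁻¹ ≤ log ((t : ℝ) / s) := by
  induction t, hst using Nat.le_induction with
  | base => simp
  | succ t hst ih =>
    have hs' : (0 : ℝ) < s := by exact_mod_cast hs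
    have ht' : (0 : ℝ) < t := by exact_mod_cast hs.trans_le hst
    have hlog : log (((t : ℝ) + 1) / s) = log ((t : ℝ) / s) + log (((t : ℝ) + 1) / t) := by
      rw [← log_mul (by positivity) (by positivity), div_mul_div_comm, mul_comm (t : ℝ),
        mul_div_mul_right _ _ ht'.ne']
    rw [sum_Icc_succ_top (by omega), Nat.cast_succ, hlog]
    exact add_le_add ih (inv_succ_le_log_succ_div (hs.trans_le hst))

lemma prod_Icc_one_add_div_le_rpow {c : ℝ} (hc : 0 ≤ c) {s t : ℕ} (hs : 0 < s) (hst : s ≤ t) :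
    ∏ k ∈ Icc (s + 1) t, (1 + c / k) ≤ ((t : ℝ) / s) ^ c := by
  have hs' : (0 : ℝ) < s := by exact_mod_cast hs
  have ht' : (0 : ℝ) < t := by exact_mod_cast hs.trans_le hst
  calc ∏ k ∈ Icc (s + 1) t, (1 + c / k)
      ≤ ∏ k ∈ Icc (s + 1) t, exp (c / k) :=
        prod_le_prod (fun _ _ => by positivity) fun k _ => by
          linarith [add_one_le_exp (c / k)]
    _ = exp (c * ∑ k ∈ Icc (s + 1) t, (k : ℝ)⁻¹) := by
        rw [← exp_sum, mul_sum]
        simp only [div_eq_mul_inv]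
    _ ≤ exp (c * log ((t : ℝ) / s)) := by
        gcongr
        exact sum_Icc_inv_le_log_div hs hst
    _ = ((t : ℝ) / s) ^ c := by rw [rpow_def_of_pos (by positivity), mul_comm]

theorem psi2_bounds_alpha_eq_one_general
    (μ η β : ℝ) (hμ : 0 < μ) (hη : 0 < η) (hβ : 0 < β)
    (t s : ℕ) (hs1 : 1 ≤ s) (hst : s < t) :
    0 < ∏ k ∈ Finset.Icc (s + 1) t, (β + μ * η * β / (k : ℝ)) ∧
    ∏ k ∈ Finset.Icc (s + 1) t, (β + μ * η * β / (k : ℝ))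
      ≤ β ^ (t - s) * ((t : ℝ) / (s : ℝ)) ^ (μ * η) := by
  have hfactor : ∀ k ∈ Icc (s + 1) t, β + μ * η * β / (k : ℝ) = β * (1 + μ * η / k) :=
    fun k _ => by ring
  rw [prod_congr rfl hfactor, prod_mul_distrib, prod_const, Nat.card_Icc,
    show t + 1 - (s + 1) = t - s by omega]
  refine ⟨by positivity, ?_⟩
  gcongr
  exact prod_Icc_one_add_div_le_rpow (by positivity) hs1 hst.le

theorem psi2_bounds_alpha_eq_one
    (μ η β : ℝ) (hμ : 0 < μ) (hη : 0 < η) (hβ : 0 < β)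
    (t s : ℕ) (ht : 2 ≤ t) (hs1 : 1 ≤ s) (hst : s < t) :
    0 < ∏ k ∈ Finset.Icc (s + 1) t, (β + μ * η * β / (k : ℝ)) ∧
    ∏ k ∈ Finset.Icc (s + 1) t, (β + μ * η * β / (k : ℝ))
      ≤ β ^ (t - s) * ((t : ℝ) / (s : ℝ)) ^ (μ * η) :=
  psi2_bounds_alpha_eq_one_general μ η β hμ hη hβ t s hs1 hst
end

section
/- Let μ, η > 0, α > 1, β ∈ [0,1). Define S(t,α,n) = ∑_{s=2}^{t} Ψ₂(t,s,α)/s^n where Ψ₂(t,s,α) = ∏_{k=s+1}^{t}(β + μηβ/k^α) and n > 0. Then t^n · S(t,α,n) converges as t → ∞ to 1/(1-β); in particular S(t,α,n) = Θ(1/t^n). -/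
/-!
Substituting `j = t - s`, the sum `t ^ n * S(t)` becomes
`∑_{j < t - 1} β ^ j * ∏_{k = t-j+1}^{t} (1 + μη / k ^ α) * (t / (t - j)) ^ n`.
For fixed `j` the `j`-th term tends to `β ^ j`, because its product has only `j` factors,
each tending to `1`. Since `α > 1`, every such product is at most `exp (∑ μη / k ^ α)`,
and `t / (t - j) ≤ j + 1`, so the terms are dominated by the summable `C (j + 1) ^ n β ^ j`.
Tannery's theorem then gives the limit `∑ β ^ j = 1 / (1 - β)`, and a nonzero limit of
`t ^ n * S(t)` is exactly `S(t) = Θ(1 / t ^ n)`.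
-/

open Filter Finset Real Asymptotics Topology

lemma sum_Icc_eq_sum_range_sub {M : Type*} [AddCommMonoid M] (g : ℕ → M) (a t : ℕ) :
    ∑ s ∈ Icc a t, g s = ∑ j ∈ range (t + 1 - a), g (t - j) := by
  refine sum_nbij' (fun s => t - s) (fun j => t - j) (fun s hs => ?_) (fun j hj => ?_)
    (fun s hs => ?_) (fun j hj => ?_) fun s hs => ?_ <;>
    simp only [mem_Icc, mem_range] at * <;>
    first | omega | (congr 1; omega)

lemma prod_Icc_sub_add_one_eq_prod_range {M : Type*} [CommMonoid M] (f : ℕ → M) {j t : ℕ}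
    (h : j ≤ t) : ∏ k ∈ Icc (t - j + 1) t, f k = ∏ i ∈ range j, f (t - i) := by
  rw [range_eq_Ico, prod_Ico_reflect f 0 (by omega : j ≤ t + 1), tsub_zero,
    Ico_add_one_right_eq_Icc, Nat.sub_add_comm h]

lemma tendsto_sum_range_of_dominated_convergence {G : Type*} [NormedAddCommGroup G]
    [CompleteSpace G] {N : ℕ → ℕ} {f : ℕ → ℕ → G} {g : ℕ → G} {bound : ℕ → ℝ}
    (hN : Tendsto N atTop atTop) (h_sum : Summable bound)
    (hf : ∀ j, Tendsto (f · j) atTop (𝓝 (g j)))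
    (h_bound : ∀ t, ∀ j < N t, ‖f t j‖ ≤ bound j) :
    Tendsto (fun t => ∑ j ∈ range (N t), f t j) atTop (𝓝 (∑' j, g j)) := by
  refine (tendsto_tsum_of_dominated_convergence
    (f := fun t => (range (N t) : Set ℕ).indicator (f t)) h_sum (fun j => (hf j).congr' ?_)
    (Eventually.of_forall fun t j => ?_)).congr
    fun t => (sum_eq_tsum_indicator _ _).symm
  · filter_upwards [hN.eventually_gt_atTop j] with t ht
    simp [ht]
  · by_cases hj : j < N t
    · simpa [hj] using h_bound t j hj
    · -- `bound j` is nonnegative, as it dominates `‖f t' j‖` for `t'` large enough.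
      obtain ⟨t', ht'⟩ := (hN.eventually_gt_atTop j).exists
      simpa [hj] using (norm_nonneg _).trans (h_bound t' j ht')

lemma summable_add_one_rpow_mul_geometric (n : ℝ) {r : ℝ} (hr0 : 0 ≤ r) (hr1 : r < 1) :
    Summable fun j : ℕ => ((j : ℝ) + 1) ^ n * r ^ j := by
  set m := ⌈n⌉₊
  have hdom : Summable fun j : ℕ => 2 ^ (m - 1) * ((j : ℝ) ^ m * r ^ j + r ^ j) :=
    ((summable_pow_mul_geometric_of_norm_lt_one m (by rwa [norm_of_nonneg hr0])).add
      (summable_geometric_of_lt_one hr0 hr1)).mul_left _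
  refine hdom.of_nonneg_of_le (fun j => by positivity) fun j => ?_
  have hj : (1 : ℝ) ≤ j + 1 := le_add_of_nonneg_left j.cast_nonneg
  calc ((j : ℝ) + 1) ^ n * r ^ j ≤ ((j : ℝ) + 1) ^ m * r ^ j := by
        gcongr
        exact (rpow_le_rpow_of_exponent_le hj (Nat.le_ceil n)).trans_eq (rpow_natCast _ m)
    _ ≤ 2 ^ (m - 1) * ((j : ℝ) ^ m + 1 ^ m) * r ^ j := by
        gcongr
        exact add_pow_le j.cast_nonneg zero_le_one m
    _ = 2 ^ (m - 1) * ((j : ℝ) ^ m * r ^ j + r ^ j) := by ring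

lemma tendsto_natCast_div_natSub_rpow (n : ℝ) (j : ℕ) :
    Tendsto (fun t : ℕ => ((t : ℝ) / ((t - j : ℕ) : ℝ)) ^ n) atTop (𝓝 1) := by
  have h := (tendsto_natCast_div_add_atTop (-(j : ℝ))).rpow_const (p := n) (Or.inl one_ne_zero)
  rw [one_rpow] at h
  refine h.congr' ?_
  filter_upwards [eventually_ge_atTop j] with t ht
  rw [Nat.cast_sub ht, sub_eq_add_neg]

lemma natCast_div_natSub_le {j t : ℕ} (h : j < t) : (t : ℝ) / ((t - j : ℕ) : ℝ) ≤ j + 1 := by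
  have h' : (j : ℝ) + 1 ≤ t := by exact_mod_cast h
  rw [div_le_iff₀ (by rw [Nat.cast_sub h.le]; linarith), Nat.cast_sub h.le]
  nlinarith [mul_nonneg j.cast_nonneg (sub_nonneg.mpr h')]

lemma tendsto_one_add_div_rpow_atTop {α : ℝ} (c : ℝ) (hα : 0 < α) :
    Tendsto (fun k : ℕ => 1 + c / (k : ℝ) ^ α) atTop (𝓝 1) := by
  simpa using tendsto_const_nhds.add
    (tendsto_const_nhds.div_atTop ((tendsto_rpow_atTop hα).comp tendsto_natCast_atTop_atTop))

lemma tendsto_prod_Icc_sub_one_add_div_rpow {α : ℝ} (c : ℝ) (hα : 0 < α) (j : ℕ) :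
    Tendsto (fun t : ℕ => ∏ k ∈ Icc (t - j + 1) t, (1 + c / (k : ℝ) ^ α)) atTop (𝓝 1) := by
  have h : Tendsto (fun t : ℕ => ∏ i ∈ range j, (1 + c / ((t - i : ℕ) : ℝ) ^ α)) atTop
      (𝓝 (∏ _i ∈ range j, (1 : ℝ))) := tendsto_finsetProd (range j) fun i _ =>
    (tendsto_one_add_div_rpow_atTop c hα).comp (tendsto_sub_atTop_nat i)
  rw [prod_const_one] at h
  refine h.congr' ?_
  filter_upwards [eventually_ge_atTop j] with t ht
  exact (prod_Icc_sub_add_one_eq_prod_range (fun k : ℕ => 1 + c / (k : ℝ) ^ α) ht).symm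

lemma prod_one_add_div_rpow_le_exp_tsum {c α : ℝ} (hc : 0 ≤ c) (hα : 1 < α) (s t : ℕ) :
    ∏ k ∈ Icc (s + 1) t, (1 + c / (k : ℝ) ^ α) ≤ exp (∑' k : ℕ, c / (k : ℝ) ^ α) := by
  have hnonneg : ∀ k : ℕ, 0 ≤ c / (k : ℝ) ^ α := fun k => by positivity
  have hsum : Summable fun k : ℕ => c / (k : ℝ) ^ α := by
    simpa [div_eq_mul_inv] using (summable_nat_rpow_inv.mpr hα).mul_left c
  calc _ ≤ exp (∑ k ∈ Icc (s + 1) t, c / (k : ℝ) ^ α) := prod_one_add_le_exp_sum _ hnonneg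
    _ ≤ _ := exp_le_exp.mpr (hsum.sum_le_tsum _ fun k _ => hnonneg k)

lemma prod_Icc_add_mul_div_rpow (β c α : ℝ) (s t : ℕ) :
    ∏ k ∈ Icc (s + 1) t, (β + c * β / (k : ℝ) ^ α) =
      β ^ (t - s) * ∏ k ∈ Icc (s + 1) t, (1 + c / (k : ℝ) ^ α) := by
  rw [← (by simp : (Icc (s + 1) t).card = t - s), ← prod_const, ← prod_mul_distrib]
  exact prod_congr rfl fun k _ => by ring

lemma rpow_mul_sum_prod_add_mul_div_rpow_eq (β c α n : ℝ) (t : ℕ) :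
    (t : ℝ) ^ n *
        ∑ s ∈ Icc 2 t, (∏ k ∈ Icc (s + 1) t, (β + c * β / (k : ℝ) ^ α)) / (s : ℝ) ^ n =
      ∑ j ∈ range (t - 1), β ^ j * (∏ k ∈ Icc (t - j + 1) t, (1 + c / (k : ℝ) ^ α)) *
        ((t : ℝ) / ((t - j : ℕ) : ℝ)) ^ n := by
  rw [sum_Icc_eq_sum_range_sub, mul_sum]
  refine sum_congr rfl fun j hj => ?_
  rw [mem_range] at hj
  rw [prod_Icc_add_mul_div_rpow, Nat.sub_sub_self (by omega),
    div_rpow (Nat.cast_nonneg _) (Nat.cast_nonneg _)]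
  ring

theorem tendsto_rpow_mul_sum_prod_add_mul_div_rpow {β c α n : ℝ} (hc : 0 ≤ c) (hα : 1 < α)
    (hn : 0 ≤ n) (hβ0 : 0 ≤ β) (hβ1 : β < 1) :
    Tendsto (fun t : ℕ => (t : ℝ) ^ n *
        ∑ s ∈ Icc 2 t, (∏ k ∈ Icc (s + 1) t, (β + c * β / (k : ℝ) ^ α)) / (s : ℝ) ^ n)
      atTop (𝓝 (1 / (1 - β))) := by
  set B := exp (∑' k : ℕ, c / (k : ℝ) ^ α)
  simp_rw [rpow_mul_sum_prod_add_mul_div_rpow_eq, one_div,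
    ← tsum_geometric_of_lt_one hβ0 hβ1]
  refine tendsto_sum_range_of_dominated_convergence (tendsto_sub_atTop_nat 1)
    ((summable_add_one_rpow_mul_geometric n hβ0 hβ1).mul_left B) (fun j => ?_) fun t j hj => ?_
  · simpa using ((tendsto_const_nhds (x := β ^ j)).mul
      (tendsto_prod_Icc_sub_one_add_div_rpow c (by linarith) j)).mul
      (tendsto_natCast_div_natSub_rpow n j)
  · have hP := prod_one_add_div_rpow_le_exp_tsum hc hα (t - j) t
    have hR : ((t : ℝ) / ((t - j : ℕ) : ℝ)) ^ n ≤ ((j : ℝ) + 1) ^ n :=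
      rpow_le_rpow (by positivity) (natCast_div_natSub_le (by omega)) hn
    rw [norm_of_nonneg (by positivity)]
    calc _ ≤ β ^ j * B * ((j : ℝ) + 1) ^ n := by gcongr
      _ = B * (((j : ℝ) + 1) ^ n * β ^ j) := by ring

theorem sum_psi2_asymptotics
    (μ η β α n : ℝ) (hμ : 0 < μ) (hη : 0 < η) (hα : 1 < α) (hn : 0 < n)
    (hβ0 : 0 ≤ β) (hβ1 : β < 1) :
    Filter.Tendsto
      (fun t : ℕ => (t : ℝ) ^ n *
        ∑ s ∈ Finset.Icc 2 t,
          (∏ k ∈ Finset.Icc (s + 1) t, (β + μ * η * β / (k : ℝ) ^ α)) / (s : ℝ) ^ n)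
      Filter.atTop (nhds (1 / (1 - β))) ∧
    (fun t : ℕ => ∑ s ∈ Finset.Icc 2 t,
        (∏ k ∈ Finset.Icc (s + 1) t, (β + μ * η * β / (k : ℝ) ^ α)) / (s : ℝ) ^ n)
      =Θ[Filter.atTop] (fun t : ℕ => 1 / (t : ℝ) ^ n) := by
  have hlim :=
    tendsto_rpow_mul_sum_prod_add_mul_div_rpow (mul_pos hμ hη).le hα hn.le hβ0 hβ1
  refine ⟨hlim, (isTheta_of_div_tendsto_nhds_ne_zero (hlim.congr fun t => ?_) ?_).symm⟩
  · rw [div_div_eq_mul_div, div_one, mul_comm]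
  · exact one_div_ne_zero (sub_ne_zero.mpr hβ1.ne')
end

section
/- Let μ, η > 0, 0 < α < 1 with μη < 2^α, and n > 0. Define Ψ₁(t,s) = ∏_{k=s+1}^{t}(1 - μη/k^α) and S(t) = ∑_{s=2}^{t} ((-1)^s / s^n) Ψ₁(t,s). Then tⁿ S(t) - (-1)^t / 2 → 0 as t → ∞; in particular |S(t)| = Θ(1/t^n). -/
/-!
Write `S t` for the sum and `G t = (-1)^t t^n S t`. Splitting off the last term of the sum gives
`G (t+1) = 1 - (1 - d t) G t` with `d t = 1 - (1 - μη/(t+1)^α)(1 + 1/t)^n`, and `d t ~ μη/t^α`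
because the correction coming from `(1 + 1/t)^n` is `O(1/t) = o(t^(-α))` when `α < 1`.
The deviation `G t - 1/2` from the fixed point changes sign at every step; over two steps it is
multiplied by `(1 - d t)(1 - d (t+1))` up to an error `o(d t)`, since `d (t+1) - d t = o(d t)`.
As `∑ d t = ∞`, the products `∏ (1 - d t)` tend to `0`, so `G t → 1/2` along even and along odd
times.
-/

open Filter Asymptotics Topology Finset

theorem prod_range_one_sub_le_exp_neg_sum {b : ℕ → ℝ} (hb : ∀ i, b i ≤ 1) (m : ℕ) :
    ∏ i ∈ range m, (1 - b i) ≤ Real.exp (-∑ i ∈ range m, b i) := by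
  rw [← sum_neg_distrib, Real.exp_sum]
  exact prod_le_prod (fun i _ => sub_nonneg.2 (hb i))
    fun i _ => by linarith [Real.add_one_le_exp (-b i)]

theorem tendsto_prod_range_one_sub_of_not_summable {b : ℕ → ℝ} (hb0 : ∀ i, 0 ≤ b i)
    (hb1 : ∀ i, b i ≤ 1) (hb : ¬Summable b) :
    Tendsto (fun m => ∏ i ∈ range m, (1 - b i)) atTop (𝓝 0) := by
  have hsum := (not_summable_iff_tendsto_nat_atTop_of_nonneg hb0).1 hb
  exact squeeze_zero (fun m => prod_nonneg fun i _ => sub_nonneg.2 (hb1 i))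
    (prod_range_one_sub_le_exp_neg_sum hb1)
    (Real.tendsto_exp_atBot.comp (tendsto_neg_atTop_atBot.comp hsum))

theorem le_max_mul_prod_range_one_sub {y b : ℕ → ℝ} (hb : ∀ i, b i ≤ 1)
    (hy : ∀ i, y (i + 1) ≤ (1 - b i) * y i) (m : ℕ) :
    y m ≤ max (y 0) 0 * ∏ i ∈ range m, (1 - b i) := by
  induction m with
  | zero => simp
  | succ m ih =>
    calc y (m + 1) ≤ (1 - b m) * y m := hy m
      _ ≤ (1 - b m) * (max (y 0) 0 * ∏ i ∈ range m, (1 - b i)) :=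
        mul_le_mul_of_nonneg_left ih (sub_nonneg.2 (hb m))
      _ = max (y 0) 0 * ∏ i ∈ range (m + 1), (1 - b i) := by rw [prod_range_succ]; ring

theorem tendsto_zero_of_le_one_sub_mul_add {x b : ℕ → ℝ} (hx : ∀ i, 0 ≤ x i)
    (hb : ∀ᶠ i in atTop, 0 ≤ b i ∧ b i ≤ 1) (hdiv : ¬Summable b)
    (hrec : ∀ ε > 0, ∀ᶠ i in atTop, x (i + 1) ≤ (1 - b i) * x i + ε * b i) :
    Tendsto x atTop (𝓝 0) := by
  refine tendsto_order.2 ⟨fun a ha => .of_forall fun i => ha.trans_le (hx i), fun a ha => ?_⟩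
  obtain ⟨N, hN⟩ := eventually_atTop.1 (hb.and (hrec (a / 2) (half_pos ha)))
  -- `x - a/2` contracts by the factor `1 - b` from `N` on
  set y : ℕ → ℝ := fun m => x (m + N) - a / 2
  have hy : ∀ m, y (m + 1) ≤ (1 - b (m + N)) * y m := fun m => by
    have := (hN (m + N) (by omega)).2
    simp only [y, add_right_comm m 1 N]
    linarith
  have hprod := tendsto_prod_range_one_sub_of_not_summable (fun m => (hN (m + N) (by omega)).1.1)
    (fun m => (hN (m + N) (by omega)).1.2) (by rwa [summable_nat_add_iff])
  have hsmall : ∀ᶠ m in atTop, max (y 0) 0 * ∏ i ∈ range m, (1 - b (i + N)) < a / 2 :=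
    (hprod.const_mul _).eventually (gt_mem_nhds (by simpa using half_pos ha))
  obtain ⟨M, hM⟩ := eventually_atTop.1 hsmall
  filter_upwards [eventually_ge_atTop (M + N)] with i hi
  obtain ⟨m, rfl⟩ : ∃ m, i = m + N := ⟨i - N, by omega⟩
  have := (le_max_mul_prod_range_one_sub (fun m => (hN (m + N) (by omega)).1.2) hy m).trans_lt
    (hM m (by omega))
  simp only [y] at this
  linarith

theorem Filter.Tendsto.of_comp_two_mul_add {α : Type*} {f : ℕ → α} {l : Filter α}
    (h : ∀ p < 2, Tendsto (fun i => f (2 * i + p)) atTop l) : Tendsto f atTop l := by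
  intro s hs
  have hev : ∀ᶠ i in atTop, ∀ p ∈ Set.Iio 2, f (2 * i + p) ∈ s :=
    (Set.finite_Iio 2).eventually_all.2 fun p hp => h p hp hs
  obtain ⟨N, hN⟩ := eventually_atTop.1 hev
  refine mem_map.2 (mem_atTop_sets.2 ⟨2 * N, fun t ht => ?_⟩)
  rw [Set.mem_preimage, ← Nat.div_add_mod t 2]
  exact hN (t / 2) (by omega) (t % 2) (Nat.mod_lt t two_pos)

theorem tendsto_two_mul_add_atTop (p : ℕ) : Tendsto (fun i => 2 * i + p) atTop atTop :=
  tendsto_atTop_mono (fun i => show i ≤ 2 * i + p by omega) tendsto_id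

theorem summable_of_summable_comp_two_mul_add {d : ℕ → ℝ}
    (hd : (fun t => d (t + 1)) =O[atTop] d) {p : ℕ} (hp : p < 2)
    (hs : Summable fun i => d (2 * i + p)) : Summable d := by
  have step : ∀ q, Summable (fun i => d (2 * i + q)) → Summable fun i => d (2 * i + q + 1) :=
    fun q hq => summable_of_isBigO_nat hq.norm <|
      (hd.comp_tendsto (tendsto_two_mul_add_atTop q)).norm_right
  interval_cases p
  · exact Summable.even_add_odd (f := d) hs (step 0 hs)
  · have h2 : Summable fun i => d (2 * (i + 1)) := (step 1 hs).congr fun i => by ring_nf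
    exact Summable.even_add_odd (f := d) ((summable_nat_add_iff 1).1 h2) hs

theorem abs_sub_half_le_of_two_steps {G₀ G₁ G₂ d₀ d₁ ε : ℝ}
    (h₁ : G₁ = 1 - (1 - d₀) * G₀) (h₂ : G₂ = 1 - (1 - d₁) * G₁)
    (hd₀ : 0 ≤ d₀) (hd₀1 : d₀ ≤ 1) (hd₁ : 0 ≤ d₁) (hd₁1 : d₁ ≤ 1) (hd₁ε : d₁ ≤ ε)
    (hdiff : |d₁ - d₀| ≤ ε * d₀) :
    |G₂ - 1 / 2| ≤ (1 - d₀) * |G₀ - 1 / 2| + ε * d₀ := by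
  have hexp : G₂ - 1 / 2 =
      (1 - d₁) * ((1 - d₀) * (G₀ - 1 / 2)) + ((d₁ - d₀) / 2 + d₁ * d₀ / 2) := by
    subst h₁ h₂; ring
  rw [hexp]
  calc _ ≤ |(1 - d₁) * ((1 - d₀) * (G₀ - 1 / 2))| + (|d₁ - d₀| / 2 + d₁ * d₀ / 2) := by
        refine (abs_add_le _ _).trans (add_le_add_right ((abs_add_le _ _).trans ?_) _)
        rw [abs_div, abs_two, abs_of_nonneg (by positivity : 0 ≤ d₁ * d₀ / 2)]
    _ ≤ 1 * ((1 - d₀) * |G₀ - 1 / 2|) + (ε * d₀ / 2 + ε * d₀ / 2) := by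
        rw [abs_mul, abs_mul, abs_of_nonneg (sub_nonneg.2 hd₁1), abs_of_nonneg (sub_nonneg.2 hd₀1)]
        gcongr
        linarith
    _ = (1 - d₀) * |G₀ - 1 / 2| + ε * d₀ := by ring

theorem tendsto_half_of_eq_one_sub_mul {G d : ℕ → ℝ}
    (hrec : ∀ᶠ t in atTop, G (t + 1) = 1 - (1 - d t) * G t)
    (hd0 : ∀ᶠ t in atTop, 0 ≤ d t) (hd : Tendsto d atTop (𝓝 0))
    (hshift : (fun t => d (t + 1)) ~[atTop] d) (hdiv : ¬Summable d) :
    Tendsto G atTop (𝓝 (1 / 2)) := by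
  refine Tendsto.of_comp_two_mul_add fun p hp => ?_
  have hsub := tendsto_two_mul_add_atTop p
  have hd1 : ∀ᶠ t in atTop, 0 ≤ d t ∧ d t ≤ 1 := hd0.and (hd.eventually (ge_mem_nhds one_pos))
  rw [tendsto_iff_norm_sub_tendsto_zero]
  refine tendsto_zero_of_le_one_sub_mul_add (b := fun i => d (2 * i + p))
    (fun i => norm_nonneg _) (hsub.eventually hd1)
    (fun hs => hdiv (summable_of_summable_comp_two_mul_add hshift.isBigO hp hs)) fun ε hε => ?_
  have hnext : ∀ {P : ℕ → Prop}, (∀ᶠ t in atTop, P t) → ∀ᶠ t in atTop, P (t + 1) :=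
    fun h => (tendsto_add_atTop_nat 1).eventually h
  have hsmall : ∀ᶠ t in atTop, |d (t + 1) - d t| ≤ ε * d t := by
    filter_upwards [hshift.isLittleO.def hε, hd0] with t ht ht0
    rwa [Real.norm_eq_abs, Real.norm_eq_abs, abs_of_nonneg ht0] at ht
  filter_upwards [hsub.eventually (hrec.and (hnext hrec) |>.and (hd1.and (hnext hd1))
    |>.and (hsmall.and (hnext (hd.eventually (ge_mem_nhds hε)))))]
    with i ⟨⟨⟨h₁, h₂⟩, hd₀, hd₁⟩, hdiff, hdε⟩
  simp only [Real.norm_eq_abs, show 2 * (i + 1) + p = 2 * i + p + 1 + 1 by ring]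
  exact abs_sub_half_le_of_two_steps h₁ h₂ hd₀.1 hd₀.2 hd₁.1 hd₁.2 hdε hdiff

section PowerDecay

variable (c α : ℝ)

theorem isEquivalent_div_natCast_add_one_rpow :
    (fun t : ℕ => c / ((t : ℝ) + 1) ^ α) ~[atTop] fun t => c / (t : ℝ) ^ α := by
  have h : (fun t : ℕ => (t : ℝ) + 1) ~[atTop] fun t => (t : ℝ) :=
    IsEquivalent.add_isLittleO IsEquivalent.refl
      (isLittleO_const_id_atTop (1 : ℝ) |>.comp_tendsto tendsto_natCast_atTop_atTop)
  exact (IsEquivalent.refl (u := fun _ => c)).div (h.rpow (fun t => t.cast_nonneg))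

variable {c α}

theorem tendsto_div_natCast_rpow (hα : 0 < α) :
    Tendsto (fun t : ℕ => c / (t : ℝ) ^ α) atTop (𝓝 0) :=
  tendsto_const_nhds.div_atTop ((tendsto_rpow_atTop hα).comp tendsto_natCast_atTop_atTop)

theorem not_summable_div_natCast_rpow (hc : c ≠ 0) (hα : α ≤ 1) :
    ¬Summable fun t : ℕ => c / (t : ℝ) ^ α := by
  simp_rw [div_eq_mul_inv, summable_mul_left_iff hc, Real.summable_nat_rpow_inv, not_lt, hα]

theorem isLittleO_natCast_inv_div_rpow (hc : c ≠ 0) (hα : α < 1) :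
    (fun t : ℕ => (t : ℝ)⁻¹) =o[atTop] fun t => c / (t : ℝ) ^ α := by
  have hpow : Tendsto (fun t : ℕ => c⁻¹ * (t : ℝ) ^ (α - 1)) atTop (𝓝 0) := by
    simpa [neg_sub] using ((tendsto_rpow_neg_atTop (sub_pos.2 hα)).comp
      tendsto_natCast_atTop_atTop).const_mul c⁻¹
  refine (isLittleO_iff_tendsto' ?_).2 (hpow.congr' ?_)
  all_goals filter_upwards [eventually_gt_atTop 0] with t ht
  · intro h
    simp_all [(Real.rpow_pos_of_pos (Nat.cast_pos.2 ht) α).ne']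
  · rw [Real.rpow_sub_one (Nat.cast_pos.2 ht).ne']
    field_simp

end PowerDecay

theorem isBigO_one_add_natCast_inv_rpow_sub_one (n : ℝ) :
    (fun t : ℕ => (1 + (t : ℝ)⁻¹) ^ n - 1) =O[atTop] fun t => (t : ℝ)⁻¹ := by
  have hderiv : HasDerivAt (fun x : ℝ => (1 + x) ^ n) (n * (1 + 0) ^ (n - 1)) 0 := by
    simpa using ((hasDerivAt_id (0 : ℝ)).const_add 1).rpow_const (p := n) (by norm_num)
  have h : (fun x : ℝ => (1 + x) ^ n - 1) =O[𝓝 0] fun x => x := by simpa using hderiv.isBigO_sub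
  exact h.comp_tendsto tendsto_inv_atTop_nhds_zero_nat

theorem isEquivalent_one_sub_one_sub_div_rpow_mul {c α : ℝ} (n : ℝ) (hc : c ≠ 0) (hα0 : 0 < α)
    (hα1 : α < 1) :
    (fun t : ℕ => 1 - (1 - c / ((t : ℝ) + 1) ^ α) * (1 + (t : ℝ)⁻¹) ^ n) ~[atTop]
      fun t => c / (t : ℝ) ^ α := by
  have hshift := isEquivalent_div_natCast_add_one_rpow c α
  have hbdd : (fun t : ℕ => 1 - c / ((t : ℝ) + 1) ^ α) =O[atTop] fun _ => (1 : ℝ) :=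
    ((hshift.symm.tendsto_nhds (tendsto_div_natCast_rpow hα0)).const_sub 1).isBigO_one ℝ
  have hq : (fun t : ℕ => 1 - (1 + (t : ℝ)⁻¹) ^ n) =o[atTop] fun t => c / (t : ℝ) ^ α :=
    (isBigO_one_add_natCast_inv_rpow_sub_one n).neg_left.trans_isLittleO
      (isLittleO_natCast_inv_div_rpow hc hα1) |>.congr_left fun t => by ring
  refine (hshift.isLittleO.add ((hbdd.mul_isLittleO hq).congr_right fun t => one_mul _)).congr_left
    fun t => ?_
  simp only [Pi.sub_apply]
  ring

noncomputable def altPsiSum (c α n : ℝ) (t : ℕ) : ℝ :=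
  ∑ s ∈ Icc 2 t, ((-1 : ℝ) ^ s / (s : ℝ) ^ n) * ∏ k ∈ Icc (s + 1) t, (1 - c / (k : ℝ) ^ α)

theorem altPsiSum_succ (c α n : ℝ) {t : ℕ} (ht : 1 ≤ t) :
    altPsiSum c α n (t + 1) =
      (1 - c / ((t : ℝ) + 1) ^ α) * altPsiSum c α n t + (-1) ^ (t + 1) / ((t : ℝ) + 1) ^ n := by
  have hprod : ∀ s ∈ Icc 2 t, (-1 : ℝ) ^ s / (s : ℝ) ^ n *
      ∏ k ∈ Icc (s + 1) (t + 1), (1 - c / (k : ℝ) ^ α) = (1 - c / ((t : ℝ) + 1) ^ α) *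
      ((-1 : ℝ) ^ s / (s : ℝ) ^ n * ∏ k ∈ Icc (s + 1) t, (1 - c / (k : ℝ) ^ α)) := by
    intro s hs
    rw [prod_Icc_succ_top (by grind : s + 1 ≤ t + 1), Nat.cast_succ]
    ring
  rw [altPsiSum, sum_Icc_succ_top (by omega : 2 ≤ t + 1), sum_congr rfl hprod, ← mul_sum,
    Icc_eq_empty (by omega : ¬t + 1 + 1 ≤ t + 1), prod_empty, mul_one, Nat.cast_succ, altPsiSum]

theorem neg_one_pow_mul_rpow_mul_altPsiSum_succ (c α n : ℝ) {t : ℕ} (ht : 1 ≤ t) :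
    (-1) ^ (t + 1) * (((t + 1 : ℕ) : ℝ) ^ n * altPsiSum c α n (t + 1)) =
      1 - (1 - c / ((t : ℝ) + 1) ^ α) * (1 + (t : ℝ)⁻¹) ^ n *
        ((-1) ^ t * ((t : ℝ) ^ n * altPsiSum c α n t)) := by
  have htpos : (0 : ℝ) < t := by exact_mod_cast ht
  have hpow : ((t : ℝ) + 1) ^ n = (1 + (t : ℝ)⁻¹) ^ n * (t : ℝ) ^ n := by
    rw [← Real.mul_rpow (by positivity) htpos.le, add_mul, one_mul, inv_mul_cancel₀ htpos.ne',
      add_comm]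
  have hcancel :
      (-1) ^ (t + 1) * (((t : ℝ) + 1) ^ n * ((-1) ^ (t + 1) / ((t : ℝ) + 1) ^ n)) = 1 := by
    rw [mul_div_cancel₀ _ (by positivity), ← mul_pow]
    norm_num
  rw [altPsiSum_succ c α n ht, Nat.cast_succ, mul_add, mul_add, hcancel, hpow]
  ring

theorem tendsto_neg_one_pow_mul_rpow_mul_altPsiSum {c α : ℝ} (n : ℝ) (hc : 0 < c) (hα0 : 0 < α)
    (hα1 : α < 1) :
    Tendsto (fun t : ℕ => (-1) ^ t * ((t : ℝ) ^ n * altPsiSum c α n t)) atTop (𝓝 (1 / 2)) := by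
  have hdv := isEquivalent_one_sub_one_sub_div_rpow_mul n hc.ne' hα0 hα1
  have hshift : (fun t : ℕ => c / ((t + 1 : ℕ) : ℝ) ^ α) ~[atTop] fun t => c / (t : ℝ) ^ α := by
    simpa only [Nat.cast_succ] using isEquivalent_div_natCast_add_one_rpow c α
  refine tendsto_half_of_eq_one_sub_mul (d := fun t : ℕ =>
      1 - (1 - c / ((t : ℝ) + 1) ^ α) * (1 + (t : ℝ)⁻¹) ^ n) ?_ (hdv.eventually_nonneg ?_)
    (hdv.symm.tendsto_nhds (tendsto_div_natCast_rpow hα0))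
    (((hdv.comp_tendsto (tendsto_add_atTop_nat 1)).trans hshift).trans hdv.symm)
    fun hs => not_summable_div_natCast_rpow hc.ne' hα1.le
      (summable_of_isBigO_nat hs hdv.isBigO_symm)
  · filter_upwards [eventually_ge_atTop 1] with t ht
    rw [neg_one_pow_mul_rpow_mul_altPsiSum_succ c α n ht, sub_sub_cancel]
  · exact .of_forall fun t => by positivity

theorem tendsto_sub_neg_one_pow_div_two {a : ℕ → ℝ}
    (h : Tendsto (fun t => (-1) ^ t * a t) atTop (𝓝 (1 / 2))) :
    Tendsto (fun t => a t - (-1) ^ t / 2) atTop (𝓝 0) := by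
  refine tendsto_zero_iff_norm_tendsto_zero.2 ((tendsto_iff_norm_sub_tendsto_zero.1 h).congr
    fun t => ?_)
  have hsign : (-1 : ℝ) ^ t * (-1) ^ t = 1 := by rw [← mul_pow]; norm_num
  have heq : (-1) ^ t * a t - 1 / 2 = (-1) ^ t * (a t - (-1) ^ t / 2) := by
    linear_combination (1 / 2 : ℝ) * hsign
  rw [Real.norm_eq_abs, Real.norm_eq_abs, heq, abs_mul, abs_neg_one_pow, one_mul]

theorem abs_isTheta_one_div_rpow_of_tendsto {S : ℕ → ℝ} {n L : ℝ} (hL : L ≠ 0)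
    (h : Tendsto (fun t : ℕ => (-1) ^ t * ((t : ℝ) ^ n * S t)) atTop (𝓝 L)) :
    (fun t => |S t|) =Θ[atTop] fun t : ℕ => 1 / (t : ℝ) ^ n := by
  have hlim : (fun t : ℕ => |(-1) ^ t * ((t : ℝ) ^ n * S t)|) ~[atTop] fun _ => |L| :=
    (isEquivalent_const_iff_tendsto (abs_ne_zero.2 hL)).2 h.abs
  have hS : (fun t => |S t|) =ᶠ[atTop]
      fun t : ℕ => |(-1) ^ t * ((t : ℝ) ^ n * S t)| * (1 / (t : ℝ) ^ n) := by
    filter_upwards [eventually_gt_atTop 0] with t ht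
    have htn : 0 < (t : ℝ) ^ n := Real.rpow_pos_of_pos (Nat.cast_pos.2 ht) n
    rw [abs_mul, abs_mul, abs_neg_one_pow, one_mul, abs_of_pos htn]
    field_simp
  exact hS.trans_isTheta ((hlim.isTheta.mul (isTheta_refl _ _)).trans
    ((isTheta_const_mul_left (abs_ne_zero.2 hL)).2 (isTheta_refl _ _)))

theorem alt_sum_psi1_alpha_lt_one_general
    (μ η α n : ℝ) (hμ : 0 < μ) (hη : 0 < η) (hα0 : 0 < α) (hα1 : α < 1) :
    Filter.Tendsto
      (fun t : ℕ => (t : ℝ) ^ n *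
          (∑ s ∈ Finset.Icc 2 t,
            ((-1 : ℝ) ^ s / (s : ℝ) ^ n) * ∏ k ∈ Finset.Icc (s + 1) t, (1 - μ * η / (k : ℝ) ^ α))
        - (-1 : ℝ) ^ t / 2)
      Filter.atTop (nhds 0) ∧
    (fun t : ℕ => |∑ s ∈ Finset.Icc 2 t,
        ((-1 : ℝ) ^ s / (s : ℝ) ^ n) * ∏ k ∈ Finset.Icc (s + 1) t, (1 - μ * η / (k : ℝ) ^ α)|)
      =Θ[Filter.atTop] (fun t : ℕ => 1 / (t : ℝ) ^ n) := by
  have hG := tendsto_neg_one_pow_mul_rpow_mul_altPsiSum n (mul_pos hμ hη) hα0 hα1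
  exact ⟨tendsto_sub_neg_one_pow_div_two hG,
    abs_isTheta_one_div_rpow_of_tendsto one_half_pos.ne' hG⟩

theorem alt_sum_psi1_alpha_lt_one
    (μ η α n : ℝ) (hμ : 0 < μ) (hη : 0 < η) (hα0 : 0 < α) (hα1 : α < 1)
    (hme : μ * η < 2 ^ α) (hn : 0 < n) :
    Filter.Tendsto
      (fun t : ℕ => (t : ℝ) ^ n *
          (∑ s ∈ Finset.Icc 2 t,
            ((-1 : ℝ) ^ s / (s : ℝ) ^ n) * ∏ k ∈ Finset.Icc (s + 1) t, (1 - μ * η / (k : ℝ) ^ α))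
        - (-1 : ℝ) ^ t / 2)
      Filter.atTop (nhds 0) ∧
    (fun t : ℕ => |∑ s ∈ Finset.Icc 2 t,
        ((-1 : ℝ) ^ s / (s : ℝ) ^ n) * ∏ k ∈ Finset.Icc (s + 1) t, (1 - μ * η / (k : ℝ) ^ α)|)
      =Θ[Filter.atTop] (fun t : ℕ => 1 / (t : ℝ) ^ n) :=
  alt_sum_psi1_alpha_lt_one_general μ η α n hμ hη hα0 hα1
end

section
/- Let μ, G > 0, β ∈ [0,1), T > 1, and suppose η satisfies c₁(1+β)/(μT(1-β)) < η < c₂(1+β)/(μT(1-β)) for constants 0 < c₁ < c₂ ≤ 2. Then the amplitude |y| = η(1-β)G / (2(1+β) - μη(1-β)) of the limit cycle satisfies c₁G/(μ(2T - c₁)) ≤ |y| ≤ c₂G/(μ(2T - c₂)); in particular |y| = Θ(G/(μT)). -/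
/-!
Put `s = μη(1 - β)/(1 + β)`. Then `|y| = (G/μ) · s/(2 - s)`, and the bound `c/(2T - c)` is the
same expression at `s = c/T`. The hypothesis on `η` says exactly `c₁/T < s < c₂/T`, and
`s ↦ s/(2 - s)` is increasing below `2`, where `c₂/T` lies since `c₂ ≤ 2 < 2T`.
-/

open Set

theorem strictMonoOn_div_sub_self {a : ℝ} (ha : 0 < a) :
    StrictMonoOn (fun s : ℝ => s / (a - s)) (Iio a) := by
  intro x hx y hy hxy
  rw [div_lt_div_iff₀ (sub_pos.2 hx) (sub_pos.2 hy)]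
  nlinarith

theorem div_mul_two_mul_sub_eq (c G μ T : ℝ) (hT : T ≠ 0) :
    c * G / (μ * (2 * T - c)) = G / μ * (c / T / (2 - c / T)) := by
  field_simp

theorem limitCycle_amplitude_eq (μ G β η : ℝ) (hμ : μ ≠ 0) (hβ : 1 + β ≠ 0) :
    η * (1 - β) * G / (2 * (1 + β) - μ * η * (1 - β)) =
      G / μ * (η * (μ * (1 - β) / (1 + β)) / (2 - η * (μ * (1 - β) / (1 + β)))) := by
  field_simp

theorem limit_cycle_amplitude_bounds_general
    (μ G β η c₁ c₂ : ℝ) (T : ℕ)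
    (hμ : 0 < μ) (hG : 0 < G) (hβ0 : 0 ≤ β) (hβ1 : β < 1) (hT : 1 < T)
    (hc12 : c₁ < c₂) (hc2 : c₂ ≤ 2)
    (hηlo : c₁ * (1 + β) / (μ * (T : ℝ) * (1 - β)) < η)
    (hηhi : η < c₂ * (1 + β) / (μ * (T : ℝ) * (1 - β))) :
    c₁ * G / (μ * (2 * (T : ℝ) - c₁)) ≤ η * (1 - β) * G / (2 * (1 + β) - μ * η * (1 - β)) ∧
    η * (1 - β) * G / (2 * (1 + β) - μ * η * (1 - β)) ≤ c₂ * G / (μ * (2 * (T : ℝ) - c₂)) := by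
  have hT2 : (2 : ℝ) ≤ T := by exact_mod_cast hT
  have hT0 : (T : ℝ) ≠ 0 := by positivity
  have hκ : 0 < μ * (1 - β) / (1 + β) := by
    have : 0 < 1 - β := by linarith
    positivity
  have hbound (c : ℝ) : c * (1 + β) / (μ * T * (1 - β)) = c / T / (μ * (1 - β) / (1 + β)) := by
    field_simp
  rw [hbound, div_lt_iff₀ hκ] at hηlo
  rw [hbound, lt_div_iff₀ hκ] at hηhi
  have hc₂T : c₂ / T < 2 := by
    rw [div_lt_iff₀ (by positivity)]
    linarith
  have hc₁T : c₁ / T < 2 := lt_trans (div_lt_div_of_pos_right hc12 (by positivity)) hc₂T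
  have hs : η * (μ * (1 - β) / (1 + β)) < 2 := hηhi.trans hc₂T
  have hmono := strictMonoOn_div_sub_self two_pos
  have hGμ : 0 ≤ G / μ := by positivity
  rw [limitCycle_amplitude_eq μ G β η hμ.ne' (by linarith), div_mul_two_mul_sub_eq _ _ _ _ hT0,
    div_mul_two_mul_sub_eq _ _ _ _ hT0]
  exact ⟨mul_le_mul_of_nonneg_left (hmono hc₁T hs hηlo).le hGμ,
    mul_le_mul_of_nonneg_left (hmono hs hc₂T hηhi).le hGμ⟩

theorem limit_cycle_amplitude_bounds
    (μ G β η c₁ c₂ : ℝ) (T : ℕ)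
    (hμ : 0 < μ) (hG : 0 < G) (hβ0 : 0 ≤ β) (hβ1 : β < 1) (hT : 1 < T)
    (hc1 : 0 < c₁) (hc12 : c₁ < c₂) (hc2 : c₂ ≤ 2)
    (hηlo : c₁ * (1 + β) / (μ * (T : ℝ) * (1 - β)) < η)
    (hηhi : η < c₂ * (1 + β) / (μ * (T : ℝ) * (1 - β))) :
    c₁ * G / (μ * (2 * (T : ℝ) - c₁)) ≤ η * (1 - β) * G / (2 * (1 + β) - μ * η * (1 - β)) ∧
    η * (1 - β) * G / (2 * (1 + β) - μ * η * (1 - β)) ≤ c₂ * G / (μ * (2 * (T : ℝ) - c₂)) :=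
  limit_cycle_amplitude_bounds_general μ G β η c₁ c₂ T hμ hG hβ0 hβ1 hT hc12 hc2 hηlo hηhi
end
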